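/- arXiv:1404.3153 — 2 statements merged into one kernel-verified Lean document; each statement's English description precedes it below -/
import Mathlib

section
/- Let κ, θ ∈ ℝ, δ ∈ ℝ with δ ≠ 0, ρ ∈ ℝ, ξ ∈ ℂ, and ψ ∈ ℂ. Set b = κ − ρδiξ, and let d ∈ ℂ be any complex number with d² = b² − 2δ²ψ and d ≠ 0; assume b − d ≠ 0 and define f = (b + d)/(b − d). Define D(τ) = ((b + d)/δ²) · (1 − e^{dτ})/(1 − f e^{dτ}) for those τ ∈ ℝ with 1 − f e^{dτ} ≠ 0. Then D(0) = 0, and at every τ with 1 − f e^{dτ} ≠ 0 the function D is differentiable with D′(τ) = ψ + (ρδiξ − κ) D(τ) + (δ²/2) D(τ)². -/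
open Complex

/-!
The numbers `(b ± d) / σ` are the two roots of `σ/2 y² − b y + ψ` (because `2σψ = b² − d²`),
i.e. the equilibria of the Riccati equation `y' = ψ − b y + σ/2 y²`, and
`f = (b + d) / (b − d)` is their ratio. The function
`((b + d) / σ) (1 − e^{dτ}) / (1 − f e^{dτ})` is the solution that starts at `0`;
checking the equation is the quotient rule followed by the identity `2σψ = b² − d²`.
With `σ = δ²` and `b = κ − ρδiξ` this is the Heston function `D`.
-/

theorem hasDerivAt_cexp_const_mul_ofReal (d : ℂ) (τ : ℝ) :
    HasDerivAt (fun t : ℝ => exp (d * t)) (d * exp (d * τ)) τ := by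
  simpa [mul_comm] using ((hasDerivAt_id (τ : ℂ)).const_mul d).cexp.comp_ofReal

theorem hasDerivAt_one_sub_cexp_div_one_sub_mul_cexp {d f : ℂ} {τ : ℝ}
    (h : 1 - f * exp (d * τ) ≠ 0) :
    HasDerivAt (fun t : ℝ => (1 - exp (d * t)) / (1 - f * exp (d * t)))
      ((f - 1) * d * exp (d * τ) / (1 - f * exp (d * τ)) ^ 2) τ := by
  have hE := hasDerivAt_cexp_const_mul_ofReal d τ
  refine ((hE.const_sub 1).div ((hE.const_mul f).const_sub 1) h).congr_deriv ?_
  field_simp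
  ring

noncomputable def riccatiSolution (σ b d : ℂ) (t : ℝ) : ℂ :=
  (b + d) / σ * (1 - exp (d * t)) / (1 - (b + d) / (b - d) * exp (d * t))

theorem riccatiSolution_zero (σ b d : ℂ) : riccatiSolution σ b d 0 = 0 := by
  simp [riccatiSolution]

theorem hasDerivAt_riccatiSolution {σ b d ψ : ℂ} (hσ : σ ≠ 0)
    (hd2 : d ^ 2 = b ^ 2 - 2 * σ * ψ) (hbd : b - d ≠ 0) {τ : ℝ}
    (h : 1 - (b + d) / (b - d) * exp (d * τ) ≠ 0) :
    HasDerivAt (riccatiSolution σ b d)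
      (ψ - b * riccatiSolution σ b d τ + σ / 2 * riccatiSolution σ b d τ ^ 2) τ := by
  have hu := (hasDerivAt_one_sub_cexp_div_one_sub_mul_cexp h).const_mul ((b + d) / σ)
  simp only [← mul_div_assoc] at hu
  refine hu.congr_deriv ?_
  have hM : b - d - (b + d) * exp (d * τ) ≠ 0 := by
    contrapose! h
    field_simp
    linear_combination h
  simp only [riccatiSolution]
  field_simp
  linear_combination (-(b - d - (b + d) * exp (d * τ)) ^ 2) * hd2

theorem heston_riccati_D_general
    (κ δ ρ : ℝ) (hδ : δ ≠ 0) (ξ ψ : ℂ)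
    (b : ℂ) (hb : b = (κ : ℂ) - (ρ : ℂ) * (δ : ℂ) * Complex.I * ξ)
    (d : ℂ) (hd2 : d ^ 2 = b ^ 2 - 2 * (δ : ℂ) ^ 2 * ψ)
    (hbd : b - d ≠ 0)
    (f : ℂ) (hf : f = (b + d) / (b - d))
    (D : ℝ → ℂ)
    (hD : ∀ τ : ℝ, D τ = ((b + d) / (δ : ℂ) ^ 2)
      * (1 - Complex.exp (d * (τ : ℂ))) / (1 - f * Complex.exp (d * (τ : ℂ)))) :
    D 0 = 0 ∧
      ∀ τ : ℝ, 1 - f * Complex.exp (d * (τ : ℂ)) ≠ 0 →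
        HasDerivAt D
          (ψ + ((ρ : ℂ) * (δ : ℂ) * Complex.I * ξ - (κ : ℂ)) * D τ
            + (δ : ℂ) ^ 2 / 2 * (D τ) ^ 2) τ := by
  subst hf
  obtain rfl : D = riccatiSolution ((δ : ℂ) ^ 2) b d := funext hD
  have hcoeff : (ρ : ℂ) * δ * I * ξ - κ = -b := by rw [hb]; ring
  refine ⟨riccatiSolution_zero _ _ _, fun τ hτ => ?_⟩
  rw [hcoeff, neg_mul, ← sub_eq_add_neg]
  exact hasDerivAt_riccatiSolution (pow_ne_zero 2 (ofReal_ne_zero.mpr hδ)) hd2 hbd hτ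

/-- The function
`D(τ) = ((b+d)/δ²)(1 − e^{dτ})/(1 − f e^{dτ})` with `b = κ − ρδiξ`, `d² = b² − 2δ²ψ`,
`f = (b+d)/(b−d)` satisfies `D(0) = 0` and the Riccati ODE
`D′(τ) = ψ + (ρδiξ − κ) D(τ) + (δ²/2) D(τ)²` at every `τ` with `1 − f e^{dτ} ≠ 0`. -/
theorem heston_riccati_D
    (κ θ δ ρ : ℝ) (hδ : δ ≠ 0) (ξ ψ : ℂ)
    (b : ℂ) (hb : b = (κ : ℂ) - (ρ : ℂ) * (δ : ℂ) * Complex.I * ξ)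
    (d : ℂ) (hd2 : d ^ 2 = b ^ 2 - 2 * (δ : ℂ) ^ 2 * ψ) (hd : d ≠ 0)
    (hbd : b - d ≠ 0)
    (f : ℂ) (hf : f = (b + d) / (b - d))
    (D : ℝ → ℂ)
    (hD : ∀ τ : ℝ, D τ = ((b + d) / (δ : ℂ) ^ 2)
      * (1 - Complex.exp (d * (τ : ℂ))) / (1 - f * Complex.exp (d * (τ : ℂ)))) :
    D 0 = 0 ∧
      ∀ τ : ℝ, 1 - f * Complex.exp (d * (τ : ℂ)) ≠ 0 →
        HasDerivAt D
          (ψ + ((ρ : ℂ) * (δ : ℂ) * Complex.I * ξ - (κ : ℂ)) * D τ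
            + (δ : ℂ) ^ 2 / 2 * (D τ) ^ 2) τ :=
  heston_riccati_D_general κ δ ρ hδ ξ ψ b hb d hd2 hbd f hf D hD
end

section
/- Let κ, θ ∈ ℝ, δ ∈ ℝ with δ ≠ 0, ρ ∈ ℝ, ξ ∈ ℂ, and ψ ∈ ℂ. Set b = κ − ρδiξ, let d ∈ ℂ satisfy d² = b² − 2δ²ψ with d ≠ 0, assume b − d ≠ 0, and define f = (b + d)/(b − d) and D(τ) = ((b + d)/δ²)(1 − e^{dτ})/(1 − f e^{dτ}). Define C(τ) = (κθ/δ²) ( (b + d)τ − 2 Log( (1 − f e^{dτ})/(1 − f) ) ), where Log is the principal branch of the complex logarithm. Then C(0) = 0, and at every τ ∈ ℝ such that 1 − f e^{dτ} ≠ 0 and the quotient (1 − f e^{dτ})/(1 − f) does not lie on the nonpositive real axis (−∞, 0], the function C is differentiable with C′(τ) = κθ · D(τ). -/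
/-! On the slit plane `Log` is holomorphic, so `C′` is `κθ/δ²` times `(b + d)` minus twice the
logarithmic derivative `-f d e^{dτ} / (1 - f e^{dτ})` of `1 - f e^{dτ}`. Since `f (b - d) = b + d`,
`(b + d)(1 - f e^{dτ}) + 2 f d e^{dτ} = (b + d)(1 - e^{dτ})`, which turns this into `κθ D(τ)`. -/

open Complex

lemma Complex.mem_slitPlane_of_not_nonpos {z : ℂ} (h : ¬(z.im = 0 ∧ z.re ≤ 0)) :
    z ∈ slitPlane := by
  rw [mem_slitPlane_iff_not_le_zero, le_def]
  exact fun ⟨hre, him⟩ => h ⟨him, hre⟩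

theorem hasDerivAt_log_one_sub_mul_exp_div (f d : ℂ) {τ : ℝ}
    (hτ : (1 - f * exp (d * τ)) / (1 - f) ∈ slitPlane) :
    HasDerivAt (fun t : ℝ => log ((1 - f * exp (d * t)) / (1 - f)))
      (-(f * d * exp (d * τ)) / (1 - f * exp (d * τ))) τ := by
  obtain ⟨hnum, hden⟩ := div_ne_zero_iff.mp (slitPlane_ne_zero hτ)
  have hlinear : HasDerivAt (fun z : ℂ => d * z) d τ := by
    simpa using (hasDerivAt_id (τ : ℂ)).const_mul d
  have hquot := ((hlinear.cexp.const_mul f).const_sub 1).div_const (1 - f)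
  exact (hquot.clog hτ).comp_ofReal.congr_deriv (by field_simp)

lemma add_two_mul_div_one_sub_mul_eq {b d f E : ℂ} (hf : f * (b - d) = b + d)
    (hE : 1 - f * E ≠ 0) :
    (b + d) + 2 * (f * d * E / (1 - f * E)) = (b + d) * (1 - E) / (1 - f * E) := by
  field_simp
  linear_combination -E * hf

theorem hasDerivAt_heston_C_bracket {b d f : ℂ} (hf : f * (b - d) = b + d) {τ : ℝ}
    (hτ : (1 - f * exp (d * τ)) / (1 - f) ∈ slitPlane) :
    HasDerivAt (fun t : ℝ => (b + d) * t - 2 * log ((1 - f * exp (d * t)) / (1 - f)))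
      ((b + d) * (1 - exp (d * τ)) / (1 - f * exp (d * τ))) τ := by
  have hE : 1 - f * exp (d * τ) ≠ 0 := (div_ne_zero_iff.mp (slitPlane_ne_zero hτ)).1
  have hlinear : HasDerivAt (fun t : ℝ => (b + d) * t) (b + d) τ := by
    simpa using (hasDerivAt_id τ).ofReal_comp.const_mul (b + d)
  refine (hlinear.sub ((hasDerivAt_log_one_sub_mul_exp_div f d hτ).const_mul 2)).congr_deriv ?_
  rw [← add_two_mul_div_one_sub_mul_eq hf hE, neg_div, mul_neg, sub_neg_eq_add]

theorem heston_ode_C_general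
    (κ θ δ : ℝ)
    (b : ℂ)
    (d : ℂ)
    (hbd : b - d ≠ 0)
    (f : ℂ) (hf : f = (b + d) / (b - d))
    (D : ℝ → ℂ)
    (hD : ∀ τ : ℝ, D τ = ((b + d) / (δ : ℂ) ^ 2)
      * (1 - Complex.exp (d * (τ : ℂ))) / (1 - f * Complex.exp (d * (τ : ℂ))))
    (C : ℝ → ℂ)
    (hC : ∀ τ : ℝ, C τ = ((κ : ℂ) * (θ : ℂ) / (δ : ℂ) ^ 2)
      * ((b + d) * (τ : ℂ)
        - 2 * Complex.log ((1 - f * Complex.exp (d * (τ : ℂ))) / (1 - f)))) :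
    C 0 = 0 ∧
      ∀ τ : ℝ, 1 - f * Complex.exp (d * (τ : ℂ)) ≠ 0 →
        ¬(((1 - f * Complex.exp (d * (τ : ℂ))) / (1 - f)).im = 0 ∧
          ((1 - f * Complex.exp (d * (τ : ℂ))) / (1 - f)).re ≤ 0) →
        HasDerivAt C ((κ : ℂ) * (θ : ℂ) * D τ) τ := by
  refine ⟨by simp [hC], fun τ _ hslit => ?_⟩
  have hf' : f * (b - d) = b + d := by rw [hf, div_mul_cancel₀ _ hbd]
  have hbracket := (hasDerivAt_heston_C_bracket hf' (mem_slitPlane_of_not_nonpos hslit)).const_mul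
    ((κ : ℂ) * θ / (δ : ℂ) ^ 2)
  rw [show C = _ from funext hC]
  exact hbracket.congr_deriv (by rw [hD]; ring)

/-- The function
`C(τ) = (κθ/δ²)((b+d)τ − 2 Log((1 − f e^{dτ})/(1 − f)))` satisfies `C(0) = 0` and
`C′(τ) = κθ D(τ)` at every `τ` where `1 − f e^{dτ} ≠ 0` and the quotient
`(1 − f e^{dτ})/(1 − f)` is off the nonpositive real axis, where
`D(τ) = ((b+d)/δ²)(1 − e^{dτ})/(1 − f e^{dτ})`, `b = κ − ρδiξ`, `d² = b² − 2δ²ψ`,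
`f = (b+d)/(b−d)`, and `Log` is the principal branch of the complex logarithm. -/
theorem heston_ode_C
    (κ θ δ ρ : ℝ) (hδ : δ ≠ 0) (ξ ψ : ℂ)
    (b : ℂ) (hb : b = (κ : ℂ) - (ρ : ℂ) * (δ : ℂ) * Complex.I * ξ)
    (d : ℂ) (hd2 : d ^ 2 = b ^ 2 - 2 * (δ : ℂ) ^ 2 * ψ) (hd : d ≠ 0)
    (hbd : b - d ≠ 0)
    (f : ℂ) (hf : f = (b + d) / (b - d))
    (D : ℝ → ℂ)
    (hD : ∀ τ : ℝ, D τ = ((b + d) / (δ : ℂ) ^ 2)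
      * (1 - Complex.exp (d * (τ : ℂ))) / (1 - f * Complex.exp (d * (τ : ℂ))))
    (C : ℝ → ℂ)
    (hC : ∀ τ : ℝ, C τ = ((κ : ℂ) * (θ : ℂ) / (δ : ℂ) ^ 2)
      * ((b + d) * (τ : ℂ)
        - 2 * Complex.log ((1 - f * Complex.exp (d * (τ : ℂ))) / (1 - f)))) :
    C 0 = 0 ∧
      ∀ τ : ℝ, 1 - f * Complex.exp (d * (τ : ℂ)) ≠ 0 →
        ¬(((1 - f * Complex.exp (d * (τ : ℂ))) / (1 - f)).im = 0 ∧
          ((1 - f * Complex.exp (d * (τ : ℂ))) / (1 - f)).re ≤ 0) →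
        HasDerivAt C ((κ : ℂ) * (θ : ℂ) * D τ) τ :=
  heston_ode_C_general κ θ δ b d hbd f hf D hD C hC
end
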